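/- Let f : ℝ → ℝ be continuous, let d_u, d_v, α, β, γ > 0 and 0 < a < L, and let (u,v) be a solution of the 1D stationary predator–prey system (S): u ∈ C¹([0,L]) with u C² on (0,a) and on (a,L), v ∈ C²([0,a]), −d_u u'' = f(u) − β u v on (0,a), −d_u u'' = f(u) on (a,L), −d_v v'' = −γ v + α u v on (0,a), u'(0) = u'(L) = 0, v'(0) = v'(a) = 0. Then the total predator population satisfies the identity ∫₀ᵃ v(x) dx = (α/(β γ)) ∫₀^L f(u(x)) dx. In particular, if 0 ≤ u ≤ 1 on [0,L] then ∫₀ᵃ v(x) dx ≤ (α L/(β γ)) · sup_{s ∈ [0,1]} |f(s)|, so the total predator population remains bounded as a → 0. -/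

import Mathlib

/-!
Integrating the predator equation and using `v'(0) = v'(a) = 0` gives `γ ∫₀ᵃ v = α ∫₀ᵃ u v`.
Integrating the prey equation over `[0,a]` and over `[a,L]`, the fluxes at `a` cancel because
`u'` is continuous there, and `u'(0) = u'(L) = 0` leaves `∫₀ᴸ f(u) = β ∫₀ᵃ u v`. Eliminating
`∫₀ᵃ u v` gives the identity, and the bound follows from `|f(u)| ≤ sup_{[0,1]} |f|`.
-/

open Set

/-- `(u,v)` (with derivatives `u'`, `v'`) solves the 1D stationary predator–prey
system (S) on prey domain `(0,L)` with predation zone `(0,a)`: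
`−d_u u'' = f(u) − β u v` on `(0,a)`, `−d_u u'' = f(u)` on `(a,L)`,
`−d_v v'' = −γ v + α u v` on `(0,a)`, with Neumann conditions
`u'(0) = u'(L) = 0`, `v'(0) = v'(a) = 0`. -/
def StatSol (du dv α β γ : ℝ) (f : ℝ → ℝ) (a L : ℝ) (u u' v v' : ℝ → ℝ) : Prop :=
  (∀ x ∈ Set.Icc 0 L, HasDerivWithinAt u (u' x) (Set.Icc 0 L) x) ∧
  ContinuousOn u' (Set.Icc 0 L) ∧
  (∀ x ∈ Set.Ioo 0 a, HasDerivAt u' (-(f (u x) - β * u x * v x) / du) x) ∧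
  (∀ x ∈ Set.Ioo a L, HasDerivAt u' (-(f (u x)) / du) x) ∧
  (∀ x ∈ Set.Icc 0 a, HasDerivWithinAt v (v' x) (Set.Icc 0 a) x) ∧
  (∀ x ∈ Set.Icc 0 a, HasDerivWithinAt v' ((γ * v x - α * u x * v x) / dv) (Set.Icc 0 a) x) ∧
  u' 0 = 0 ∧ u' L = 0 ∧ v' 0 = 0 ∧ v' a = 0

open MeasureTheory

theorem integral_eq_mul_sub_of_hasDerivAt_neg_div {w F : ℝ → ℝ} {a b d : ℝ} (hd : d ≠ 0)
    (hab : a ≤ b) (hw : ContinuousOn w (Icc a b))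
    (hderiv : ∀ x ∈ Ioo a b, HasDerivAt w (-F x / d) x) (hF : IntervalIntegrable F volume a b) :
    ∫ x in a..b, F x = d * (w a - w b) := by
  have hftc :=
    intervalIntegral.integral_eq_sub_of_hasDerivAt_of_le hab hw hderiv (hF.neg.div_const d)
  rw [intervalIntegral.integral_div, intervalIntegral.integral_neg, div_eq_iff hd] at hftc
  linarith

theorem integral_comp_le_mul_iSup_abs {f u : ℝ → ℝ} {a b c d : ℝ} (hab : a ≤ b)
    (hf : ContinuousOn f (Icc c d)) (hu : MapsTo u (Icc a b) (Icc c d)) :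
    ∫ x in a..b, f (u x) ≤ (b - a) * ⨆ s : Icc c d, |f s| := by
  have hbdd : BddAbove (range fun s : Icc c d => |f s|) := by
    simpa only [image_eq_range] using isCompact_Icc.bddAbove_image hf.abs
  have hbound : ∀ x ∈ uIoc a b, ‖f (u x)‖ ≤ ⨆ s : Icc c d, |f s| := fun x hx =>
    le_ciSup hbdd ⟨u x, hu (Ioc_subset_Icc_self (uIoc_of_le hab ▸ hx))⟩
  calc ∫ x in a..b, f (u x) ≤ ‖∫ x in a..b, f (u x)‖ := Real.le_norm_self _
    _ ≤ (⨆ s : Icc c d, |f s|) * |b - a| :=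
      intervalIntegral.norm_integral_le_of_norm_le_const hbound
    _ = (b - a) * ⨆ s : Icc c d, |f s| := by rw [abs_of_nonneg (sub_nonneg.2 hab), mul_comm]

namespace StatSol

variable {du dv α β γ : ℝ} {f : ℝ → ℝ} {a L : ℝ} {u u' v v' : ℝ → ℝ}

theorem continuousOn_prey (h : StatSol du dv α β γ f a L u u' v v') :
    ContinuousOn u (Icc 0 L) :=
  fun x hx => (h.1 x hx).continuousWithinAt

theorem continuousOn_predator (h : StatSol du dv α β γ f a L u u' v v') :
    ContinuousOn v (Icc 0 a) := by
  obtain ⟨-, -, -, -, hv, -⟩ := h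
  exact fun x hx => (hv x hx).continuousWithinAt

theorem predator_balance (h : StatSol du dv α β γ f a L u u' v v') (hdv : dv ≠ 0)
    (ha : 0 ≤ a) (haL : a ≤ L) :
    γ * ∫ x in (0:ℝ)..a, v x = α * ∫ x in (0:ℝ)..a, u x * v x := by
  have hu_c := h.continuousOn_prey.mono (Icc_subset_Icc le_rfl haL)
  have hv_c := h.continuousOn_predator
  obtain ⟨-, -, -, -, -, hv', -, -, hv'0, hv'a⟩ := h
  have huv : IntervalIntegrable (fun x => u x * v x) volume 0 a :=
    (hu_c.mul hv_c).intervalIntegrable_of_Icc ha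
  have hv_int : IntervalIntegrable v volume 0 a := hv_c.intervalIntegrable_of_Icc ha
  have hflux := integral_eq_mul_sub_of_hasDerivAt_neg_div
    (F := fun x => α * (u x * v x) - γ * v x) hdv ha
    (fun x hx => (hv' x hx).continuousWithinAt)
    (fun x hx => ((hv' x (Ioo_subset_Icc_self hx)).hasDerivAt
      (Icc_mem_nhds hx.1 hx.2)).congr_deriv (by ring))
    ((huv.const_mul α).sub (hv_int.const_mul γ))
  rw [hv'0, hv'a, sub_self, mul_zero,
    intervalIntegral.integral_sub (huv.const_mul α) (hv_int.const_mul γ),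
    intervalIntegral.integral_const_mul, intervalIntegral.integral_const_mul] at hflux
  linarith

theorem prey_balance (h : StatSol du dv α β γ f a L u u' v v') (hf : Continuous f)
    (hdu : du ≠ 0) (ha : 0 ≤ a) (haL : a ≤ L) :
    ∫ x in (0:ℝ)..L, f (u x) = β * ∫ x in (0:ℝ)..a, u x * v x := by
  have hu_c := h.continuousOn_prey
  have hv_c := h.continuousOn_predator
  obtain ⟨-, hu'_c, hu''_left, hu''_right, -, -, hu'0, hu'L, -, -⟩ := h
  have hleft_sub : Icc 0 a ⊆ Icc 0 L := Icc_subset_Icc le_rfl haL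
  have hright_sub : Icc a L ⊆ Icc 0 L := Icc_subset_Icc ha le_rfl
  have hfu_left : IntervalIntegrable (fun x => f (u x)) volume 0 a :=
    (hf.comp_continuousOn (hu_c.mono hleft_sub)).intervalIntegrable_of_Icc ha
  have hfu_right : IntervalIntegrable (fun x => f (u x)) volume a L :=
    (hf.comp_continuousOn (hu_c.mono hright_sub)).intervalIntegrable_of_Icc haL
  have huv : IntervalIntegrable (fun x => β * (u x * v x)) volume 0 a :=
    ((hu_c.mono hleft_sub).mul hv_c).intervalIntegrable_of_Icc ha |>.const_mul β
  have hleft := integral_eq_mul_sub_of_hasDerivAt_neg_div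
    (F := fun x => f (u x) - β * (u x * v x)) hdu ha (hu'_c.mono hleft_sub)
    (fun x hx => by simpa only [mul_assoc] using hu''_left x hx) (hfu_left.sub huv)
  have hright := integral_eq_mul_sub_of_hasDerivAt_neg_div hdu haL (hu'_c.mono hright_sub)
    hu''_right hfu_right
  rw [intervalIntegral.integral_sub hfu_left huv, intervalIntegral.integral_const_mul,
    hu'0] at hleft
  rw [hu'L] at hright
  rw [← intervalIntegral.integral_add_adjacent_intervals hfu_left hfu_right, hright]
  linarith

end StatSol

/-- **Identity (4.7) for the total predator population.**
For any solution of the 1D stationary system (S),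
`∫₀ᵃ v = (α/(βγ)) ∫₀^L f(u)`; in particular, if `0 ≤ u ≤ 1` then
`∫₀ᵃ v ≤ (αL/(βγ)) sup_{[0,1]} |f|`, so the total predator population
remains bounded as `a → 0`. -/
theorem total_predator_population_identity
    (f : ℝ → ℝ) (hf : Continuous f)
    (du dv α β γ : ℝ) (hdu : 0 < du) (hdv : 0 < dv) (hα : 0 < α) (hβ : 0 < β)
    (hγ : 0 < γ)
    (a L : ℝ) (ha : 0 < a) (haL : a < L)
    (u u' v v' : ℝ → ℝ)
    (hsol : StatSol du dv α β γ f a L u u' v v') :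
    (∫ x in (0:ℝ)..a, v x) = α / (β * γ) * ∫ x in (0:ℝ)..L, f (u x) ∧
    ((∀ x ∈ Set.Icc (0:ℝ) L, u x ∈ Set.Icc (0:ℝ) 1) →
      (∫ x in (0:ℝ)..a, v x) ≤ α * L / (β * γ) * ⨆ s : Set.Icc (0:ℝ) 1, |f s|) := by
  have hpredator := hsol.predator_balance hdv.ne' ha.le haL.le
  have hprey := hsol.prey_balance hf hdu.ne' ha.le haL.le
  have hidentity : ∫ x in (0:ℝ)..a, v x = α / (β * γ) * ∫ x in (0:ℝ)..L, f (u x) := by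
    rw [hprey]
    field_simp
    linear_combination hpredator
  refine ⟨hidentity, fun hu01 => ?_⟩
  have hbound := integral_comp_le_mul_iSup_abs (ha.trans haL).le hf.continuousOn hu01
  rw [sub_zero] at hbound
  calc ∫ x in (0:ℝ)..a, v x
      ≤ α / (β * γ) * (L * ⨆ s : Icc (0:ℝ) 1, |f s|) := by
        rw [hidentity]; gcongr
    _ = α * L / (β * γ) * ⨆ s : Icc (0:ℝ) 1, |f s| := by ring
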